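/- Monotonicity of the relaxation invariant: at every intermediate state of the gSoFa relaxation process, for each vertex v the current value maxId(v) is an upper bound on the true value (the minimum over admissible s-to-v paths of the maximum intermediate vertex); moreover, whenever maxId(v) is finite, there actually exists an admissible path from s to v whose maximum intermediate vertex equals the current maxId(v). -/
import Mathlib


/-- `IsPath G a l b` : directed path from `a` to `b` with intermediate vertices `l`. -/
def IsPath (G : ℕ → ℕ → Prop) : ℕ → List ℕ → ℕ → Prop
  | a, [], b => G a b
  | a, x :: xs, b => G a x ∧ IsPath G x xs b

/-- `maxId G s v` : min over admissible `s → v` paths (intermediates `< s`)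
of the maximum intermediate vertex (`0` when no intermediates), `⊤` if none. -/
noncomputable def maxId (G : ℕ → ℕ → Prop) (s v : ℕ) : ℕ∞ :=
  sInf {m : ℕ∞ | ∃ l, IsPath G s l v ∧ (∀ x ∈ l, x < s) ∧ m = (l.foldr max 0 : ℕ)}

/-- One nondeterministic relaxation step of gSoFa:
update some vertex `v` along some edge `(u,v)` with `u < s`. -/
def RelaxStep (G : ℕ → ℕ → Prop) (s : ℕ) (m m' : ℕ → ℕ∞) : Prop :=
  ∃ u v, G u v ∧ u < s ∧
    m' = Function.update m v (min (m v) (max (m u) (u : ℕ∞)))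

lemma IsPath.append {G : ℕ → ℕ → Prop} {a u v : ℕ} :
    ∀ {l : List ℕ}, IsPath G a l u → G u v → IsPath G a (l ++ [u]) v := by
  intro l
  induction l generalizing a with
  | nil => intro h h2; exact ⟨h, h2⟩
  | cons x xs ih => intro h h2; exact ⟨h.1, ih h.2 h2⟩

lemma foldr_append_max (l : List ℕ) (u : ℕ) :
    (l ++ [u]).foldr max 0 = max (l.foldr max 0) u := by
  induction l with
  | nil => simp
  | cons x xs ih =>
    simp only [List.cons_append, List.foldr_cons, ih]
    exact (max_assoc x _ u).symm

open Classical in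
/-- Invariant of the relaxation: at every intermediate state reachable from the
initial state, the stored value is an upper bound on the true `maxId`, and every
finite stored value is witnessed by an actual admissible path whose maximum
intermediate vertex equals it. -/
theorem relaxation_invariant
    (G : ℕ → ℕ → Prop) (s : ℕ) (m0 m : ℕ → ℕ∞)
    (hinit : ∀ v, m0 v = if G s v then 0 else ⊤)
    (hreach : Relation.ReflTransGen (RelaxStep G s) m0 m) :
    ∀ v, maxId G s v ≤ m v ∧
      (m v ≠ ⊤ → ∃ l, IsPath G s l v ∧ (∀ x ∈ l, x < s) ∧
        ((l.foldr max 0 : ℕ) : ℕ∞) = m v) := by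
  -- First prove just the witness part for all reachable states.
  suffices h : ∀ v, m v ≠ ⊤ → ∃ l, IsPath G s l v ∧ (∀ x ∈ l, x < s) ∧
      ((l.foldr max 0 : ℕ) : ℕ∞) = m v by
    intro v
    refine ⟨?_, h v⟩
    by_cases hv : m v = ⊤
    · simp [hv]
    · obtain ⟨l, hp, hs, he⟩ := h v hv
      exact sInf_le ⟨l, hp, hs, he.symm⟩
  induction hreach with
  | refl =>
    intro v hv
    rw [hinit v] at hv ⊢
    by_cases hG : G s v
    · exact ⟨[], hG, by simp, by simp [hG]⟩
    · simp [hG] at hv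
  | @tail b c hab hstep ih =>
    obtain ⟨u, v, hG, hus, rfl⟩ := hstep
    intro w hw
    by_cases hwv : w = v
    · subst hwv
      rw [Function.update_self] at hw ⊢
      rcases le_total (b w) (max (b u) (u : ℕ∞)) with hle | hle
      · rw [min_eq_left hle] at hw ⊢
        obtain ⟨l, hp, hs, he⟩ := ih w hw
        exact ⟨l, hp, hs, he⟩
      · rw [min_eq_right hle] at hw ⊢
        have hu : b u ≠ ⊤ := by
          intro h; rw [h] at hw; simp at hw
        obtain ⟨l, hp, hs, he⟩ := ih u hu
        refine ⟨l ++ [u], hp.append hG, ?_, ?_⟩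
        · intro x hx
          rcases List.mem_append.mp hx with h | h
          · exact hs x h
          · simp at h; subst h; exact hus
        · rw [foldr_append_max, ← he]
          exact_mod_cast rfl
    · rw [Function.update_of_ne hwv] at hw ⊢
      exact ih w hw
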